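/- arXiv:1803.02929 — 11 statements merged into one kernel-verified Lean document; each statement's English description precedes it below -/
import Mathlib

section
/- Suppose hypothesis H1+ holds at t = a (for all sufficiently small ε > 0 the equation p(a,h) = a + ε has a solution h = h(a,ε) with h(a,ε) → 0 as ε → 0⁺) and the map h ↦ p(a,h) is continuous at h = 0. If the p-derivative D_p f(a) exists (as a finite limit), then f is right-continuous at a. -/
open Filter Topology Set

/-! If `h ε` solves `p a h = a + ε`, then `f (a + ε) - f a` is the numerator of the
`p`-difference quotient at `h ε`. The quotient converges while `h ε → 0`, so the numerator
tends to `0`. The only care needed is that `h ε ≠ 0` for small `ε`, which holds because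
`p a 0 = a + ε` for at most one `ε`. -/

theorem tendsto_nhds_zero_of_tendsto_div {𝕜 : Type*} [NormedField 𝕜] {u : 𝕜 → 𝕜} {L : 𝕜}
    (h : Tendsto (fun x => u x / x) (𝓝[≠] 0) (𝓝 L)) : Tendsto u (𝓝[≠] 0) (𝓝 0) := by
  have hprod := h.mul (tendsto_nhdsWithin_of_tendsto_nhds tendsto_id)
  rw [mul_zero] at hprod
  refine hprod.congr' ?_
  filter_upwards [self_mem_nhdsWithin] with x hx
  exact div_mul_cancel₀ (u x) hx

theorem eventually_ne_of_eventually_eq_add {α β : Type*} [AddGroup α] {l : Filter α}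
    (hl : l ≤ cofinite) {q : β → α} {s : α → β} {a : α}
    (h : ∀ᶠ ε in l, q (s ε) = a + ε) (b : β) : ∀ᶠ ε in l, s ε ≠ b := by
  filter_upwards [h, hl (eventually_cofinite_ne (-a + q b))] with ε hε hne hb
  rw [hb] at hε
  exact hne (eq_neg_add_iff_add_eq.2 hε.symm)

theorem continuousWithinAt_Ici_iff_tendsto_add_nhdsGT {β : Type*} [TopologicalSpace β]
    {f : ℝ → β} {a : ℝ} :
    ContinuousWithinAt f (Ici a) a ↔ Tendsto (fun ε => f (a + ε)) (𝓝[>] 0) (𝓝 (f a)) := by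
  rw [← continuousWithinAt_Ioi_iff_Ici, ContinuousWithinAt, ← add_zero a,
    ← map_add_left_nhdsGT, tendsto_map'_iff, add_zero]
  rfl

theorem p_differentiable_right_continuous_general
    (p : ℝ → ℝ → ℝ) (f : ℝ → ℝ) (a L : ℝ) (hsol : ℝ → ℝ)
    (hH1 : ∀ᶠ ε in 𝓝[>] (0 : ℝ), p a (hsol ε) = a + ε)
    (hsol0 : Tendsto hsol (𝓝[>] (0 : ℝ)) (𝓝 0))
    (hD : Tendsto (fun h => (f (p a h) - f a) / h) (𝓝[≠] (0 : ℝ)) (𝓝 L)) :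
    ContinuousWithinAt f (Ici a) a := by
  have hsol_ne : Tendsto hsol (𝓝[>] 0) (𝓝[≠] 0) :=
    tendsto_nhdsWithin_iff.2 ⟨hsol0, eventually_ne_of_eventually_eq_add
      ((nhdsGT_le_nhdsNE 0).trans (nhdsNE_le_cofinite 0)) hH1 0⟩
  have hnum : Tendsto (fun ε => f (a + ε) - f a) (𝓝[>] 0) (𝓝 0) :=
    ((tendsto_nhds_zero_of_tendsto_div hD).comp hsol_ne).congr' <| hH1.mono fun ε hε => by
      simp only [Function.comp_apply, hε]
  exact continuousWithinAt_Ici_iff_tendsto_add_nhdsGT.2 (tendsto_sub_nhds_zero_iff.1 hnum)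

/-- If `H1⁺` holds at `t = a` (for all sufficiently small `ε > 0`
the equation `p a h = a + ε` has a solution `h = hsol ε`, with `hsol ε → 0` as `ε → 0⁺`),
the map `h ↦ p a h` is continuous at `h = 0`, and the `p`-derivative
`D_p f (a) = lim_{h→0} (f (p a h) - f a)/h` exists (as a finite limit `L`),
then `f` is right-continuous at `a`. -/
theorem p_differentiable_right_continuous
    (p : ℝ → ℝ → ℝ) (f : ℝ → ℝ) (a L : ℝ) (hsol : ℝ → ℝ)
    (hH1 : ∀ᶠ ε in 𝓝[>] (0 : ℝ), p a (hsol ε) = a + ε)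
    (hsol0 : Tendsto hsol (𝓝[>] (0 : ℝ)) (𝓝 0))
    (hpcont : ContinuousAt (fun h => p a h) 0)
    (hD : Tendsto (fun h => (f (p a h) - f a) / h) (𝓝[≠] (0 : ℝ)) (𝓝 L)) :
    ContinuousWithinAt f (Ici a) a :=
  p_differentiable_right_continuous_general p f a L hsol hH1 hsol0 hD
end

section
/- Suppose hypothesis H1− holds at t = a (for all sufficiently small ε > 0 the equation p(a,h) = a − ε has a solution h = h(a,ε) with h(a,ε) → 0 as ε → 0⁺) and the map h ↦ p(a,h) is continuous at h = 0. If the p-derivative D_p f(a) exists (as a finite limit), then f is left-continuous at a. -/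
open Filter Topology Set

/-- If `H1⁻` holds at `t = a` (for all sufficiently small `ε > 0`
the equation `p a h = a - ε` has a solution `h = hsol ε`, with `hsol ε → 0` as `ε → 0⁺`),
the map `h ↦ p a h` is continuous at `h = 0`, and the `p`-derivative
`D_p f (a) = lim_{h→0} (f (p a h) - f a)/h` exists (as a finite limit `L`),
then `f` is left-continuous at `a`. -/
theorem p_differentiable_left_continuous
    (p : ℝ → ℝ → ℝ) (f : ℝ → ℝ) (a L : ℝ) (hsol : ℝ → ℝ)
    (hH1 : ∀ᶠ ε in 𝓝[>] (0 : ℝ), p a (hsol ε) = a - ε)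
    (hsol0 : Tendsto hsol (𝓝[>] (0 : ℝ)) (𝓝 0))
    (hpcont : ContinuousAt (fun h => p a h) 0)
    (hD : Tendsto (fun h => (f (p a h) - f a) / h) (𝓝[≠] (0 : ℝ)) (𝓝 L)) :
    ContinuousWithinAt f (Iic a) a := by
  -- eventually `hsol ε ≠ 0`
  have h1 : ∀ᶠ ε in 𝓝[>] (0 : ℝ), ε ≠ a - p a 0 := by
    by_cases hc : a - p a 0 = 0
    · filter_upwards [self_mem_nhdsWithin] with ε hε
      rw [hc]; exact ne_of_gt hε
    · exact eventually_ne_nhdsWithin (Ne.symm hc)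
  have hne : ∀ᶠ ε in 𝓝[>] (0 : ℝ), hsol ε ≠ 0 := by
    filter_upwards [h1, hH1] with ε h1ε h2ε
    intro h0
    rw [h0] at h2ε
    exact h1ε (by linarith)
  have hsol0' : Tendsto hsol (𝓝[>] (0 : ℝ)) (𝓝[≠] (0 : ℝ)) := by
    rw [tendsto_nhdsWithin_iff]
    exact ⟨hsol0, hne⟩
  have hcomp : Tendsto (fun ε => (f (p a (hsol ε)) - f a) / hsol ε)
      (𝓝[>] (0 : ℝ)) (𝓝 L) := hD.comp hsol0'
  have hmul : Tendsto (fun ε => hsol ε * ((f (p a (hsol ε)) - f a) / hsol ε))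
      (𝓝[>] (0 : ℝ)) (𝓝 (0 * L)) := hsol0.mul hcomp
  rw [zero_mul] at hmul
  have hdiff : Tendsto (fun ε => f (a - ε) - f a) (𝓝[>] (0 : ℝ)) (𝓝 0) := by
    refine hmul.congr' ?_
    filter_upwards [hne, hH1] with ε hε hpε
    rw [mul_div_cancel₀ _ hε, hpε]
  have key : Tendsto (fun ε => f (a - ε)) (𝓝[>] (0 : ℝ)) (𝓝 (f a)) := by
    have := hdiff.add (tendsto_const_nhds (x := f a))
    simpa using this
  have hmap : Tendsto (fun x => a - x) (𝓝[<] a) (𝓝[>] (0 : ℝ)) := by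
    apply tendsto_nhdsWithin_of_tendsto_nhds_of_eventually_within
    · have : Tendsto (fun x : ℝ => a - x) (𝓝 a) (𝓝 (a - a)) :=
        tendsto_const_nhds.sub tendsto_id
      simpa using this.mono_left nhdsWithin_le_nhds
    · filter_upwards [self_mem_nhdsWithin] with x hx
      simp only [mem_Iio] at hx
      simp only [mem_Ioi]
      linarith
  have hleft : Tendsto f (𝓝[<] a) (𝓝 (f a)) := by
    refine (key.comp hmap).congr fun x => ?_
    simp [sub_sub_cancel]
  rw [ContinuousWithinAt, ← Iio_union_right, nhdsWithin_union, nhdsWithin_singleton,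
    tendsto_sup]
  exact ⟨hleft, tendsto_pure_nhds f a⟩
end

section
/- Suppose both hypotheses H1+ and H1− hold at t = a (for all sufficiently small ε > 0 each of the equations p(a,h) = a + ε and p(a,h) = a − ε has a solution h = h(a,ε) with h(a,ε) → 0 as ε → 0⁺) and the map h ↦ p(a,h) is continuous at h = 0. If the p-derivative D_p f(a) exists (as a finite limit), then f is continuous at a. -/
open Filter Topology

/-!
Multiplying the difference quotient by `h` shows `f (p a h) → f a` as `h → 0`, `h ≠ 0`.
The solutions `h(a, ±ε)` tend to `0` and are eventually nonzero, since `h(a, ±ε) = 0` would force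
`p a 0 = a ± ε`, which holds for at most one `ε`. Substituting them gives `f (a ± ε) → f a` as
`ε → 0⁺`, so both one-sided limits of `f` at `a` equal `f a`.
-/
theorem tendsto_nhds_of_tendsto_sub_div {𝕜 : Type*} [NormedField 𝕜] {g : 𝕜 → 𝕜} {b L : 𝕜}
    (h : Tendsto (fun x => (g x - b) / x) (𝓝[≠] 0) (𝓝 L)) : Tendsto g (𝓝[≠] 0) (𝓝 b) := by
  have hsub : Tendsto (fun x => (g x - b) / x * x) (𝓝[≠] 0) (𝓝 (L * 0)) :=
    h.mul (tendsto_nhdsWithin_of_tendsto_nhds tendsto_id)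
  rw [mul_zero] at hsub
  refine tendsto_sub_nhds_zero_iff.mp (hsub.congr' ?_)
  filter_upwards [self_mem_nhdsWithin] with x hx using div_mul_cancel₀ _ hx

theorem Filter.Tendsto.comp_of_eventually_factor {α X Y Z : Type*} [TopologicalSpace X]
    [TopologicalSpace Z] {l : Filter α} {φ : X → Y} {F : Y → Z} {s : α → X} {u : α → Y}
    {x₀ : X} {c : Z} (hF : Tendsto (F ∘ φ) (𝓝[≠] x₀) (𝓝 c))
    (hfactor : ∀ᶠ ε in l, φ (s ε) = u ε) (hs : Tendsto s l (𝓝 x₀))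
    (hu : Tendsto u l cofinite) : Tendsto (F ∘ u) l (𝓝 c) := by
  have hs_ne : ∀ᶠ ε in l, s ε ≠ x₀ := by
    filter_upwards [hfactor, hu.eventually (eventually_cofinite_ne (φ x₀))] with ε hε hne hs0
    exact hne (hs0 ▸ hε.symm)
  refine (hF.comp (tendsto_nhdsWithin_iff.mpr ⟨hs, hs_ne⟩)).congr' ?_
  filter_upwards [hfactor] with ε hε
  simp only [Function.comp_apply, hε]

section OrderedAddCommGroup

variable {X H Z : Type*} [TopologicalSpace X] [TopologicalSpace Z] [TopologicalSpace H]
  [AddCommGroup H] [PartialOrder H] [IsOrderedAddMonoid H] [IsTopologicalAddGroup H] [T1Space H]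
  {φ : X → H} {F : H → Z} {s : H → X} {x₀ : X} {a : H} {c : Z}

theorem tendsto_nhdsGT_of_eventually_factor (hF : Tendsto (F ∘ φ) (𝓝[≠] x₀) (𝓝 c))
    (hfactor : ∀ᶠ ε in 𝓝[>] 0, φ (s ε) = a + ε) (hs : Tendsto s (𝓝[>] 0) (𝓝 x₀)) :
    Tendsto F (𝓝[>] a) (𝓝 c) := by
  have hmap : map (a + ·) (𝓝[>] 0) = 𝓝[>] a := by simp
  rw [← hmap, tendsto_map'_iff]
  exact hF.comp_of_eventually_factor hfactor hs
    (hmap.le.trans ((nhdsGT_le_nhdsNE a).trans (nhdsNE_le_cofinite a)))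

theorem tendsto_nhdsLT_of_eventually_factor (hF : Tendsto (F ∘ φ) (𝓝[≠] x₀) (𝓝 c))
    (hfactor : ∀ᶠ ε in 𝓝[>] 0, φ (s ε) = a - ε) (hs : Tendsto s (𝓝[>] 0) (𝓝 x₀)) :
    Tendsto F (𝓝[<] a) (𝓝 c) := by
  have hmap : map (a - ·) (𝓝[>] 0) = 𝓝[<] a := by simp
  rw [← hmap, tendsto_map'_iff]
  exact hF.comp_of_eventually_factor hfactor hs
    (hmap.le.trans ((nhdsLT_le_nhdsNE a).trans (nhdsNE_le_cofinite a)))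

end OrderedAddCommGroup

theorem p_differentiable_continuous_general
    (p : ℝ → ℝ → ℝ) (f : ℝ → ℝ) (a L : ℝ) (hsolp hsolm : ℝ → ℝ)
    (hH1p : ∀ᶠ ε in 𝓝[>] (0 : ℝ), p a (hsolp ε) = a + ε)
    (hsolp0 : Tendsto hsolp (𝓝[>] (0 : ℝ)) (𝓝 0))
    (hH1m : ∀ᶠ ε in 𝓝[>] (0 : ℝ), p a (hsolm ε) = a - ε)
    (hsolm0 : Tendsto hsolm (𝓝[>] (0 : ℝ)) (𝓝 0))
    (hD : Tendsto (fun h => (f (p a h) - f a) / h) (𝓝[≠] (0 : ℝ)) (𝓝 L)) :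
    ContinuousAt f a := by
  have hcomp : Tendsto (f ∘ p a) (𝓝[≠] 0) (𝓝 (f a)) := tendsto_nhds_of_tendsto_sub_div hD
  exact continuousAt_iff_continuous_left'_right'.mpr
    ⟨tendsto_nhdsLT_of_eventually_factor hcomp hH1m hsolm0,
      tendsto_nhdsGT_of_eventually_factor hcomp hH1p hsolp0⟩

/-- If both `H1⁺` and `H1⁻` hold at `t = a` (for all sufficiently small
`ε > 0` each equation `p a h = a + ε` and `p a h = a - ε` has a solution `h = h(a,ε)`
tending to `0` as `ε → 0⁺`), the map `h ↦ p a h` is continuous at `h = 0`, and the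
`p`-derivative `D_p f (a)` exists (as a finite limit `L`), then `f` is continuous at `a`. -/
theorem p_differentiable_continuous
    (p : ℝ → ℝ → ℝ) (f : ℝ → ℝ) (a L : ℝ) (hsolp hsolm : ℝ → ℝ)
    (hH1p : ∀ᶠ ε in 𝓝[>] (0 : ℝ), p a (hsolp ε) = a + ε)
    (hsolp0 : Tendsto hsolp (𝓝[>] (0 : ℝ)) (𝓝 0))
    (hH1m : ∀ᶠ ε in 𝓝[>] (0 : ℝ), p a (hsolm ε) = a - ε)
    (hsolm0 : Tendsto hsolm (𝓝[>] (0 : ℝ)) (𝓝 0))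
    (hpcont : ContinuousAt (fun h => p a h) 0)
    (hD : Tendsto (fun h => (f (p a h) - f a) / h) (𝓝[≠] (0 : ℝ)) (𝓝 L)) :
    ContinuousAt f a :=
  p_differentiable_continuous_general p f a L hsolp hsolm hH1p hsolp0 hH1m hsolm0 hD
end

section
/- (Product Rule) Assume that at t ∈ I both hypotheses H1+ and H1− hold (for all sufficiently small ε > 0 each of the equations p(t,h) = t + ε and p(t,h) = t − ε has a solution h = h(t,ε) with h(t,ε) → 0 as ε → 0⁺) and that the map h ↦ p(t,h) is continuous at h = 0. If f and g are both p-differentiable at t, then their product f·g is p-differentiable at t and D_p(f·g)(t) = f(t)·D_p g(t) + g(t)·D_p f(t). -/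
open Filter Topology Set

/-
A convergent difference quotient forces continuity along the perturbation: u h - a is the
quotient times h, which tends to 0. The product rule then comes from the identity
(u v - a b) / h = u · (v - b) / h + b · (u - a) / h, which holds for every h (at h = 0 both
sides are 0 by the convention x / 0 = 0).
-/

variable {𝕜 : Type*} [NormedField 𝕜]

theorem tendsto_of_tendsto_sub_div {u : 𝕜 → 𝕜} {a L : 𝕜}
    (hu : Tendsto (fun h => (u h - a) / h) (𝓝[≠] 0) (𝓝 L)) :
    Tendsto u (𝓝[≠] 0) (𝓝 a) := by
  have hid : Tendsto (fun h : 𝕜 => h) (𝓝[≠] 0) (𝓝 0) := nhdsWithin_le_nhds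
  have hprod : Tendsto (fun h => (u h - a) / h * h) (𝓝[≠] 0) (𝓝 0) := by
    simpa using hu.mul hid
  refine tendsto_sub_nhds_zero_iff.mp (hprod.congr' ?_)
  filter_upwards [self_mem_nhdsWithin] with h (hh : h ≠ 0)
  exact div_mul_cancel₀ _ hh

theorem Filter.Tendsto.mul_sub_div {α : Type*} {l : Filter α} {u v d : α → 𝕜} {a b L M : 𝕜}
    (hu₀ : Tendsto u l (𝓝 a)) (hu : Tendsto (fun x => (u x - a) / d x) l (𝓝 L))
    (hv : Tendsto (fun x => (v x - b) / d x) l (𝓝 M)) :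
    Tendsto (fun x => (u x * v x - a * b) / d x) l (𝓝 (a * M + b * L)) := by
  have key : (fun x => (u x * v x - a * b) / d x) =
      fun x => u x * ((v x - b) / d x) + b * ((u x - a) / d x) := by
    funext x
    ring
  rw [key]
  exact (hu₀.mul hv).add (tendsto_const_nhds.mul hu)

theorem p_derivative_product_rule_general
    (p : ℝ → ℝ → ℝ) (f g : ℝ → ℝ) (t Lf Lg : ℝ)
    (hf : Tendsto (fun h => (f (p t h) - f t) / h) (𝓝[≠] (0 : ℝ)) (𝓝 Lf))
    (hg : Tendsto (fun h => (g (p t h) - g t) / h) (𝓝[≠] (0 : ℝ)) (𝓝 Lg)) :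
    Tendsto (fun h => ((f * g) (p t h) - (f * g) t) / h) (𝓝[≠] (0 : ℝ))
      (𝓝 (f t * Lg + g t * Lf)) :=
  (tendsto_of_tendsto_sub_div hf).mul_sub_div hf hg

/-- **Product Rule.** Assume `H1⁺` and `H1⁻` hold at `t` and `h ↦ p t h`
is continuous at `h = 0`. If `f` and `g` are both `p`-differentiable at `t`, with
`D_p f (t) = Lf` and `D_p g (t) = Lg`, then the product `f·g` is `p`-differentiable at `t`
and `D_p (f·g) (t) = f t · D_p g (t) + g t · D_p f (t)`. -/
theorem p_derivative_product_rule
    (p : ℝ → ℝ → ℝ) (f g : ℝ → ℝ) (t Lf Lg : ℝ) (hsolp hsolm : ℝ → ℝ)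
    (hH1p : ∀ᶠ ε in 𝓝[>] (0 : ℝ), p t (hsolp ε) = t + ε)
    (hsolp0 : Tendsto hsolp (𝓝[>] (0 : ℝ)) (𝓝 0))
    (hH1m : ∀ᶠ ε in 𝓝[>] (0 : ℝ), p t (hsolm ε) = t - ε)
    (hsolm0 : Tendsto hsolm (𝓝[>] (0 : ℝ)) (𝓝 0))
    (hpcont : ContinuousAt (fun h => p t h) 0)
    (hf : Tendsto (fun h => (f (p t h) - f t) / h) (𝓝[≠] (0 : ℝ)) (𝓝 Lf))
    (hg : Tendsto (fun h => (g (p t h) - g t) / h) (𝓝[≠] (0 : ℝ)) (𝓝 Lg)) :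
    Tendsto (fun h => ((f * g) (p t h) - (f * g) t) / h) (𝓝[≠] (0 : ℝ))
      (𝓝 (f t * Lg + g t * Lf)) :=
  p_derivative_product_rule_general p f g t Lf Lg hf hg
end

section
/- (Quotient Rule) Assume that at t ∈ I both hypotheses H1+ and H1− hold (for all sufficiently small ε > 0 each of the equations p(t,h) = t + ε and p(t,h) = t − ε has a solution h = h(t,ε) with h(t,ε) → 0 as ε → 0⁺) and that the map h ↦ p(t,h) is continuous at h = 0. If f and g are both p-differentiable at t and g(t) ≠ 0, then the quotient f/g is p-differentiable at t and D_p(f/g)(t) = (g(t)·D_p f(t) − f(t)·D_p g(t)) / g(t)². -/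
open Filter Topology Set

/-- **Quotient Rule.** Assume `H1⁺` and `H1⁻` hold at `t` and `h ↦ p t h`
is continuous at `h = 0`. If `f` and `g` are both `p`-differentiable at `t`, with
`D_p f (t) = Lf` and `D_p g (t) = Lg`, and `g t ≠ 0`, then the quotient `f/g` is
`p`-differentiable at `t` and `D_p (f/g) (t) = (g t · Lf - f t · Lg) / (g t)²`. -/
theorem p_derivative_quotient_rule
    (p : ℝ → ℝ → ℝ) (f g : ℝ → ℝ) (t Lf Lg : ℝ) (hsolp hsolm : ℝ → ℝ)
    (hH1p : ∀ᶠ ε in 𝓝[>] (0 : ℝ), p t (hsolp ε) = t + ε)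
    (hsolp0 : Tendsto hsolp (𝓝[>] (0 : ℝ)) (𝓝 0))
    (hH1m : ∀ᶠ ε in 𝓝[>] (0 : ℝ), p t (hsolm ε) = t - ε)
    (hsolm0 : Tendsto hsolm (𝓝[>] (0 : ℝ)) (𝓝 0))
    (hpcont : ContinuousAt (fun h => p t h) 0)
    (hf : Tendsto (fun h => (f (p t h) - f t) / h) (𝓝[≠] (0 : ℝ)) (𝓝 Lf))
    (hg : Tendsto (fun h => (g (p t h) - g t) / h) (𝓝[≠] (0 : ℝ)) (𝓝 Lg))
    (hgt : g t ≠ 0) :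
    Tendsto (fun h => ((f / g) (p t h) - (f / g) t) / h) (𝓝[≠] (0 : ℝ))
      (𝓝 ((g t * Lf - f t * Lg) / (g t) ^ 2)) := by
  have hid : Tendsto (fun h : ℝ => h) (𝓝[≠] (0:ℝ)) (𝓝 0) :=
    tendsto_nhdsWithin_of_tendsto_nhds tendsto_id
  have hgp : Tendsto (fun h => g (p t h)) (𝓝[≠] (0:ℝ)) (𝓝 (g t)) := by
    have h1 : Tendsto (fun h => (g (p t h) - g t) / h * h) (𝓝[≠] (0:ℝ)) (𝓝 (Lg * 0)) :=
      hg.mul hid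
    have h2 : Tendsto (fun h => g (p t h) - g t) (𝓝[≠] (0:ℝ)) (𝓝 0) := by
      rw [mul_zero] at h1
      refine h1.congr' ?_
      filter_upwards [self_mem_nhdsWithin] with h hh
      have hh' : h ≠ 0 := hh
      field_simp
    have := h2.add_const (g t)
    simpa using this
  have hne : ∀ᶠ h in 𝓝[≠] (0:ℝ), g (p t h) ≠ 0 :=
    hgp.eventually_ne hgt
  have key : Tendsto (fun h => ((f (p t h) - f t) / h * g t - f t * ((g (p t h) - g t) / h))
      / (g (p t h) * g t)) (𝓝[≠] (0:ℝ)) (𝓝 ((Lf * g t - f t * Lg) / (g t * g t))) :=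
    ((hf.mul_const (g t)).sub (tendsto_const_nhds.mul hg)).div (hgp.mul_const (g t))
      (mul_ne_zero hgt hgt)
  have heq : (g t * Lf - f t * Lg) / (g t) ^ 2 = (Lf * g t - f t * Lg) / (g t * g t) := by
    ring_nf
  rw [heq]
  refine key.congr' ?_
  filter_upwards [hne, self_mem_nhdsWithin] with h hgne hh
  have hh' : h ≠ 0 := hh
  simp only [Pi.div_apply]
  field_simp
  ring
end

section
/- (Chain Rule) Assume that at t ∈ I both hypotheses H1+ and H1− hold (for all sufficiently small ε > 0 each of the equations p(t,h) = t + ε and p(t,h) = t − ε has a solution h = h(t,ε) with h(t,ε) → 0 as ε → 0⁺) and that the map h ↦ p(t,h) is continuous at h = 0. Let f be continuous on I and p-differentiable at t, and let g be defined on the range of f and be differentiable (in the classical sense) at f(t). Then the composition g ∘ f is p-differentiable at t and D_p(g ∘ f)(t) = g′(f(t)) · D_p f(t). -/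
open Filter Topology Set

/-- **Chain Rule.** Assume `H1⁺` and `H1⁻` hold at `t ∈ I` and `h ↦ p t h`
is continuous at `h = 0`, where `I` is the underlying interval and the range of `h ↦ p t h`
lies in `I`. Let `f` be continuous on `I` and `p`-differentiable at `t` (with
`D_p f (t) = Lf`), and let `g` be differentiable in the classical sense at `f t`, with
derivative `g'`. Then `g ∘ f` is `p`-differentiable at `t` and
`D_p (g ∘ f) (t) = g' (f t) · D_p f (t)`. -/
theorem p_derivative_chain_rule
    (I : Set ℝ) (p : ℝ → ℝ → ℝ) (f g : ℝ → ℝ) (t Lf g' : ℝ) (hsolp hsolm : ℝ → ℝ)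
    (htI : t ∈ I) (hrange : ∀ h : ℝ, p t h ∈ I)
    (hH1p : ∀ᶠ ε in 𝓝[>] (0 : ℝ), p t (hsolp ε) = t + ε)
    (hsolp0 : Tendsto hsolp (𝓝[>] (0 : ℝ)) (𝓝 0))
    (hH1m : ∀ᶠ ε in 𝓝[>] (0 : ℝ), p t (hsolm ε) = t - ε)
    (hsolm0 : Tendsto hsolm (𝓝[>] (0 : ℝ)) (𝓝 0))
    (hpcont : ContinuousAt (fun h => p t h) 0)
    (hfcont : ContinuousOn f I)
    (hf : Tendsto (fun h => (f (p t h) - f t) / h) (𝓝[≠] (0 : ℝ)) (𝓝 Lf))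
    (hg : HasDerivAt g g' (f t)) :
    Tendsto (fun h => ((g ∘ f) (p t h) - (g ∘ f) t) / h) (𝓝[≠] (0 : ℝ))
      (𝓝 (g' * Lf)) := by
  set φ : ℝ → ℝ := fun y => if y = f t then g' else (g y - g (f t)) / (y - f t) with hφdef
  -- f (p t h) → f t along the punctured neighborhood
  have hft : Tendsto (fun h => f (p t h)) (𝓝[≠] (0:ℝ)) (𝓝 (f t)) := by
    have h1 : Tendsto (fun h : ℝ => (f (p t h) - f t) / h * h) (𝓝[≠] (0:ℝ)) (𝓝 (Lf * 0)) :=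
      hf.mul (tendsto_nhdsWithin_of_tendsto_nhds tendsto_id)
    have h2 : Tendsto (fun h : ℝ => f (p t h) - f t) (𝓝[≠] (0:ℝ)) (𝓝 0) := by
      rw [mul_zero] at h1
      refine h1.congr' ?_
      filter_upwards [self_mem_nhdsWithin] with h hh
      have hh0 : h ≠ 0 := hh
      field_simp
    have := h2.add_const (f t)
    simpa using this
  -- φ tends to g' at f t
  have hφt : Tendsto φ (𝓝 (f t)) (𝓝 g') := by
    rw [← nhdsNE_sup_pure (f t), tendsto_sup]
    constructor
    · have hs := hasDerivAt_iff_tendsto_slope.mp hg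
      refine hs.congr' ?_
      filter_upwards [self_mem_nhdsWithin] with y hy
      have hy' : y ≠ f t := hy
      simp [hφdef, hy', slope_def_field, div_eq_div_iff, sub_ne_zero.mpr hy']
    · have : φ (f t) = g' := by simp [hφdef]
      simpa [Filter.tendsto_pure_left] using fun s hs => mem_of_mem_nhds (this ▸ hs)
  -- the key algebraic identity
  have key : ∀ h : ℝ, ((g ∘ f) (p t h) - (g ∘ f) t) / h
      = φ (f (p t h)) * ((f (p t h) - f t) / h) := by
    intro h
    by_cases hy : f (p t h) = f t
    · simp [hφdef, hy]
    · have hne : f (p t h) - f t ≠ 0 := sub_ne_zero.mpr hy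
      simp only [hφdef, Function.comp_apply, if_neg hy]
      field_simp
  have final : Tendsto (fun h => φ (f (p t h)) * ((f (p t h) - f t) / h)) (𝓝[≠] (0:ℝ))
      (𝓝 (g' * Lf)) := (hφt.comp hft).mul hf
  exact final.congr (fun h => (key h).symm)
end

section
/- Assume that at t ∈ I both hypotheses H1+ and H1− hold (for all sufficiently small ε > 0 each of the equations p(t,h) = t + ε and p(t,h) = t − ε has a solution h = h(t,ε) with h(t,ε) → 0 as ε → 0⁺), that p(t,h) and the partial derivative p_h(t,h) = ∂p/∂h (t,h) are continuous in h in a neighborhood of h = 0, and that p_h(t,0) ≠ 0. If f is differentiable at t in the classical sense, then f is p-differentiable at t and D_p f(t) = p_h(t,0) · f′(t). -/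
open Filter Topology Set

/-- Assume `H1⁺` and `H1⁻` hold at `t`, that `h ↦ p t h` is continuous at
`h = 0` and differentiable in `h` near `h = 0` with partial derivative `ph h = p_h(t,h)`
which is continuous at `h = 0`, and that `ph 0 = p_h(t,0) ≠ 0`. If `f` is differentiable at
`t` in the classical sense, with derivative `f'`, then `f` is `p`-differentiable at `t` and
`D_p f (t) = p_h(t,0) · f' (t)`. -/
theorem differentiable_implies_p_differentiable
    (p : ℝ → ℝ → ℝ) (f : ℝ → ℝ) (t f' : ℝ) (ph : ℝ → ℝ) (hsolp hsolm : ℝ → ℝ)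
    (hH1p : ∀ᶠ ε in 𝓝[>] (0 : ℝ), p t (hsolp ε) = t + ε)
    (hsolp0 : Tendsto hsolp (𝓝[>] (0 : ℝ)) (𝓝 0))
    (hH1m : ∀ᶠ ε in 𝓝[>] (0 : ℝ), p t (hsolm ε) = t - ε)
    (hsolm0 : Tendsto hsolm (𝓝[>] (0 : ℝ)) (𝓝 0))
    (hpcont : ContinuousAt (fun h => p t h) 0)
    (hph : ∀ᶠ h in 𝓝 (0 : ℝ), HasDerivAt (fun k => p t k) (ph h) h)
    (hphcont : ContinuousAt ph 0)
    (hph0 : ph 0 ≠ 0)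
    (hf : HasDerivAt f f' t) :
    Tendsto (fun h => (f (p t h) - f t) / h) (𝓝[≠] (0 : ℝ)) (𝓝 (ph 0 * f')) := by
  -- First, p t 0 = t.
  have hpt0 : p t 0 = t := by
    have h1 : Tendsto (fun ε => p t (hsolp ε)) (𝓝[>] (0 : ℝ)) (𝓝 (p t 0)) :=
      hpcont.tendsto.comp hsolp0
    have h2 : Tendsto (fun ε => p t (hsolp ε)) (𝓝[>] (0 : ℝ)) (𝓝 t) := by
      have h3 : Tendsto (fun ε : ℝ => t + ε) (𝓝[>] (0 : ℝ)) (𝓝 t) := by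
        have hc : ContinuousAt (fun ε : ℝ => t + ε) 0 := by fun_prop
        simpa using hc.tendsto.mono_left nhdsWithin_le_nhds
      exact h3.congr' (by filter_upwards [hH1p] with ε hε using hε.symm)
    exact tendsto_nhds_unique h1 h2
  -- Chain rule at 0.
  have hp0 : HasDerivAt (fun k => p t k) (ph 0) 0 := hph.self_of_nhds
  have hft : HasDerivAt f f' (p t 0) := by rw [hpt0]; exact hf
  have hcomp : HasDerivAt (fun h => f (p t h)) (f' * ph 0) 0 := hft.comp 0 hp0
  have := hasDerivAt_iff_tendsto_slope.mp hcomp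
  rw [mul_comm]
  refine this.congr' ?_
  filter_upwards [self_mem_nhdsWithin] with h (hh : h ≠ 0)
  simp [slope_def_field, div_eq_div_iff hh hh, hpt0]
end

section
/- Assume that at t ∈ I both hypotheses H1+ and H1− hold (for all sufficiently small ε > 0 each of the equations p(t,h) = t + ε and p(t,h) = t − ε has a solution h = h(t,ε) with h(t,ε) → 0 as ε → 0⁺), that p(t,h) and the partial derivative p_h(t,h) are continuous in h in a neighborhood of h = 0, that p_h(t,0) ≠ 0, and that lim_{ε→0} ε/h(t,ε) exists and is nonzero. If f is p-differentiable at t, then f is differentiable at t in the classical sense. -/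
/-! Along the solutions `h(t, ±ε)` of `p(t, h) = t ± ε`, the ordinary one-sided difference
quotient of `f` at `t` is the `p`-difference quotient divided by the slope `±ε / h(t, ±ε)` of
`p(t, ·)` at `0`. Since `p(t, ·)` has derivative `p_h(t, 0) ≠ 0` at `0` and `h(t, ±ε) → 0`, both
one-sided derivatives of `f` at `t` exist and equal `D_p f(t) / p_h(t, 0)`. -/

open Filter Topology

section SlopeComp

variable {𝕜 : Type*} [NontriviallyNormedField 𝕜] {F g : 𝕜 → 𝕜}

theorem slope_comp_div_slope {a b : 𝕜} (hba : b ≠ a) :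
    slope (F ∘ g) a b / slope g a b = slope F (g a) (g b) := by
  simp only [slope_def_field, Function.comp_apply]
  exact div_div_div_cancel_right₀ (sub_ne_zero.mpr hba) _ _

theorem tendsto_slope_of_hasDerivAt_comp {a d L : 𝕜} {α : Type*} {l : Filter α} {u v : α → 𝕜}
    (hg : HasDerivAt g d a) (hd : d ≠ 0) (hFg : HasDerivAt (F ∘ g) L a)
    (hv : Tendsto v l (𝓝[≠] (g a))) (hu : Tendsto u l (𝓝 a))
    (hguv : ∀ᶠ x in l, g (u x) = v x) :
    Tendsto (slope F (g a) ∘ v) l (𝓝 (L / d)) := by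
  have hua : ∀ᶠ x in l, u x ≠ a := by
    filter_upwards [hguv, tendsto_nhdsWithin_iff.1 hv |>.2] with x hx hvx hux
    exact hvx (by rw [← hx, hux]; rfl)
  have hu' : Tendsto u l (𝓝[≠] a) := tendsto_nhdsWithin_iff.2 ⟨hu, hua⟩
  refine ((hFg.tendsto_slope.comp hu').div (hg.tendsto_slope.comp hu') hd).congr' ?_
  filter_upwards [hguv, hua] with x hx hux
  simp only [Pi.div_apply, Function.comp_apply]
  rw [slope_comp_div_slope hux, hx]

end SlopeComp

theorem p_differentiable_implies_differentiable_general
    (p : ℝ → ℝ → ℝ) (f : ℝ → ℝ) (t L : ℝ) (ph : ℝ → ℝ) (hsolp hsolm : ℝ → ℝ)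
    (hH1p : ∀ᶠ ε in 𝓝[>] (0 : ℝ), p t (hsolp ε) = t + ε)
    (hsolp0 : Tendsto hsolp (𝓝[>] (0 : ℝ)) (𝓝 0))
    (hH1m : ∀ᶠ ε in 𝓝[>] (0 : ℝ), p t (hsolm ε) = t - ε)
    (hsolm0 : Tendsto hsolm (𝓝[>] (0 : ℝ)) (𝓝 0))
    (hph : ∀ᶠ h in 𝓝 (0 : ℝ), HasDerivAt (fun k => p t k) (ph h) h)
    (hph0 : ph 0 ≠ 0)
    (hf : Tendsto (fun h => (f (p t h) - f t) / h) (𝓝[≠] (0 : ℝ)) (𝓝 L)) :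
    DifferentiableAt ℝ f t := by
  have hg : HasDerivAt (p t) (ph 0) 0 := hph.self_of_nhds
  have hpt : p t 0 = t :=
    tendsto_nhds_unique ((hg.continuousAt.tendsto.comp hsolp0).congr' hH1p)
      (by simpa using ((continuous_const_add t).tendsto 0).mono_left nhdsWithin_le_nhds)
  have hfg : HasDerivAt (f ∘ p t) L 0 := hasDerivAt_iff_tendsto_slope.2 <|
    hf.congr fun h => by simp [slope_def_field, hpt, div_eq_inv_mul]
  have hvR : Tendsto (t + ·) (𝓝[>] 0) (𝓝[≠] (p t 0)) := by
    rw [hpt, Tendsto, map_add_left_nhdsGT, add_zero]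
    exact nhdsGT_le_nhdsNE t
  have hvL : Tendsto (t - ·) (𝓝[>] 0) (𝓝[≠] (p t 0)) := by
    rw [hpt, Tendsto, map_subLeft_nhdsGT, sub_zero]
    exact nhdsLT_le_nhdsNE t
  have hR := tendsto_slope_of_hasDerivAt_comp hg hph0 hfg hvR hsolp0 hH1p
  have hL := tendsto_slope_of_hasDerivAt_comp hg hph0 hfg hvL hsolm0 hH1m
  rw [hpt, ← tendsto_map'_iff, map_add_left_nhdsGT, add_zero] at hR
  rw [hpt, ← tendsto_map'_iff, map_subLeft_nhdsGT, sub_zero] at hL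
  refine (hasDerivAt_iff_tendsto_slope (f' := L / ph 0)).2 ?_ |>.differentiableAt
  rw [← nhdsLT_sup_nhdsGT, tendsto_sup]
  exact ⟨hL, hR⟩

/-- Assume `H1⁺` and `H1⁻` hold at `t` (with solution functions
`hsolp ε`, `hsolm ε` tending to `0` as `ε → 0⁺`), that `h ↦ p t h` is continuous at `h = 0`
and differentiable in `h` near `h = 0` with partial derivative `ph h = p_h(t,h)` continuous
at `h = 0`, that `ph 0 = p_h(t,0) ≠ 0`, and that `lim_{ε→0⁺} ε / h(t,ε)` exists and is
nonzero (for each of the solution functions). If `f` is `p`-differentiable at `t` (i.e.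
`D_p f (t) = L` exists as a finite limit), then `f` is differentiable at `t` in the
classical sense. -/
theorem p_differentiable_implies_differentiable
    (p : ℝ → ℝ → ℝ) (f : ℝ → ℝ) (t L Kp Km : ℝ) (ph : ℝ → ℝ) (hsolp hsolm : ℝ → ℝ)
    (hH1p : ∀ᶠ ε in 𝓝[>] (0 : ℝ), p t (hsolp ε) = t + ε)
    (hsolp0 : Tendsto hsolp (𝓝[>] (0 : ℝ)) (𝓝 0))
    (hH1m : ∀ᶠ ε in 𝓝[>] (0 : ℝ), p t (hsolm ε) = t - ε)
    (hsolm0 : Tendsto hsolm (𝓝[>] (0 : ℝ)) (𝓝 0))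
    (hpcont : ContinuousAt (fun h => p t h) 0)
    (hph : ∀ᶠ h in 𝓝 (0 : ℝ), HasDerivAt (fun k => p t k) (ph h) h)
    (hphcont : ContinuousAt ph 0)
    (hph0 : ph 0 ≠ 0)
    (hratiop : Tendsto (fun ε => ε / hsolp ε) (𝓝[>] (0 : ℝ)) (𝓝 Kp)) (hKp : Kp ≠ 0)
    (hratiom : Tendsto (fun ε => ε / hsolm ε) (𝓝[>] (0 : ℝ)) (𝓝 Km)) (hKm : Km ≠ 0)
    (hf : Tendsto (fun h => (f (p t h) - f t) / h) (𝓝[≠] (0 : ℝ)) (𝓝 L)) :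
    DifferentiableAt ℝ f t :=
  p_differentiable_implies_differentiable_general p f t L ph hsolp hsolm hH1p hsolp0 hH1m hsolm0 hph
    hph0 hf
end

section
/- Let p(t,h) = t + h² and let f : ℝ → ℝ be defined by f(t) = sgn(t) for t ≠ 0 and f(0) = 1. Then the p-derivative D_p f(0) = lim_{h→0} (f(h²) − f(0))/h exists and equals 0, yet f is not continuous at t = 0. Hence p-differentiability at a point does not in general imply continuity at that point. -/
open Filter Topology Set

/-- For `p t h = t + h²` and `f` defined by `f t = sgn t` for `t ≠ 0` and
`f 0 = 1`, the `p`-derivative `D_p f (0) = lim_{h→0} (f (0 + h²) - f 0)/h` exists and equals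
`0`, yet `f` is not continuous at `0`. Hence `p`-differentiability at a point does not imply
continuity there. -/
theorem p_differentiable_not_continuous
    (f : ℝ → ℝ)
    (hf : ∀ t : ℝ, t ≠ 0 → f t = Real.sign t) (hf0 : f 0 = 1) :
    Tendsto (fun h => (f (0 + h ^ 2) - f 0) / h) (𝓝[≠] (0 : ℝ)) (𝓝 0) ∧
    ¬ ContinuousAt f 0 := by
  constructor
  · have heq : ∀ h : ℝ, h ∈ ({0}ᶜ : Set ℝ) →
        (fun h => (f (0 + h ^ 2) - f 0) / h) h = 0 := by
      intro h hh
      have hh0 : h ≠ 0 := hh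
      have hsq : (0 : ℝ) + h ^ 2 ≠ 0 := by positivity
      have : f (0 + h ^ 2) = 1 := by
        rw [hf _ hsq, Real.sign_of_pos (by positivity)]
      rw [zero_add] at this
      simp [this, hf0, sub_self, zero_div]
    exact Tendsto.congr' (eventuallyEq_nhdsWithin_of_eqOn (fun h hh => (heq h hh).symm))
      tendsto_const_nhds
  · intro hc
    have hseq : Tendsto (fun n : ℕ => -(1 : ℝ) / (n + 1)) atTop (𝓝 0) := by
      have : Tendsto (fun n : ℕ => (1 : ℝ) / (n + 1)) atTop (𝓝 0) :=
        tendsto_one_div_add_atTop_nhds_zero_nat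
      have := this.neg
      simpa [neg_div] using this
    have h1 : Tendsto (fun n : ℕ => f (-(1 : ℝ) / (n + 1))) atTop (𝓝 (f 0)) :=
      (hc.tendsto.comp hseq)
    have h2 : ∀ n : ℕ, f (-(1 : ℝ) / (n + 1)) = -1 := by
      intro n
      have hneg : -(1 : ℝ) / (n + 1) < 0 := div_neg_of_neg_of_pos (by norm_num) (by positivity)
      have hne : -(1 : ℝ) / (n + 1) ≠ 0 := ne_of_lt hneg
      rw [hf _ hne, Real.sign_of_neg hneg]
    rw [hf0] at h1
    have h3 : Tendsto (fun _ : ℕ => (-1 : ℝ)) atTop (𝓝 1) := by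
      simpa [h2] using h1
    have := tendsto_nhds_unique h3 tendsto_const_nhds
    norm_num at this
end

section
/- Let p(t,h) = t + h³ and f(t) = |t|. Then the p-derivative D_p f(0) = lim_{h→0} (f(h³) − f(0))/h exists and equals 0, but f is not differentiable at 0 in the classical sense. (Note p_h(t,0) = 0 for all t, so the hypothesis p_h(t,0) ≠ 0 in the equivalence between differentiability and p-differentiability cannot be dropped.) -/
open Filter Topology Set

/-- For `p t h = t + h³` and `f t = |t|`, the `p`-derivative
`D_p f (0) = lim_{h→0} (f (0 + h³) - f 0)/h` exists and equals `0`, but `f` is not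
classically differentiable at `0`.  (Here `p_h(t,0) = 0`, showing the hypothesis
`p_h(t,0) ≠ 0` cannot be dropped from the equivalence of differentiability and
`p`-differentiability.) -/
theorem p_differentiable_not_differentiable :
    Tendsto (fun h : ℝ => ((fun t : ℝ => |t|) (0 + h ^ 3) - (fun t : ℝ => |t|) 0) / h)
      (𝓝[≠] (0 : ℝ)) (𝓝 0) ∧
    ¬ DifferentiableAt ℝ (fun t : ℝ => |t|) 0 := by
  constructor
  · have hb : ∀ᶠ h : ℝ in 𝓝[≠] (0:ℝ),
        ‖((fun t : ℝ => |t|) (0 + h ^ 3) - (fun t : ℝ => |t|) 0) / h‖ ≤ h ^ 2 := by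
      filter_upwards [self_mem_nhdsWithin] with h hh
      simp only [mem_compl_iff, mem_singleton_iff] at hh
      simp only [abs_zero, sub_zero, zero_add]
      rw [Real.norm_eq_abs, abs_div, abs_abs, abs_pow,
        div_le_iff₀ (by positivity : (0:ℝ) < |h|), ← sq_abs h]
      ring_nf
      exact le_refl _
    refine squeeze_zero_norm' hb ?_
    have : Tendsto (fun h : ℝ => h ^ 2) (𝓝 (0:ℝ)) (𝓝 0) := by
        simpa using (continuous_pow 2).tendsto (0:ℝ)
    exact this.mono_left nhdsWithin_le_nhds
  · exact not_differentiableAt_abs_zero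
end

section
/- Let 0 < α < 1, g > 0, and constants x₀, u₀, y₀, v₀ ∈ ℝ. Define for t > 0: x(t) = x₀ + u₀·t^α/α and y(t) = y₀ + v₀·t^α/α − g·t^{2α}/(2α²). Then for every t > 0, x and y are twice continuously differentiable and satisfy t^{1−α}·(t^{1−α}·x′(t))′ = 0 and t^{1−α}·(t^{1−α}·y′(t))′ = −g; that is, (x(t), y(t)) solves the equations of motion under gravity, m·D^{2α}x = 0 and m·D^{2α}y = −mg, for the fractional derivative induced by p(t,h,α) = t + t^{1−α}h. -/
open Filter Topology Set

/-! In the time variable `τ = t^α/α` one has `t^{1-α}·dτ/dt = 1`, so by the chain rule the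
operator `f ↦ t^{1-α}·f'` becomes `d/dτ`. The claimed trajectories are `x₀ + u₀τ` and
`y₀ + v₀τ - gτ²/2`, the classical motion under gravity in the time `τ`, whose second
`τ`-derivatives are `0` and `-g`. -/

noncomputable def fracTime (α t : ℝ) : ℝ := t ^ α / α

section fracTime

variable {α : ℝ}

theorem hasDerivAt_fracTime (hα : α ≠ 0) {t : ℝ} (ht : 0 < t) :
    HasDerivAt (fracTime α) (t ^ (α - 1)) t :=
  ((Real.hasDerivAt_rpow_const (p := α) (Or.inl ht.ne')).div_const α).congr_deriv
    (by field_simp)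

theorem contDiffOn_fracTime {n : WithTop ℕ∞} : ContDiffOn ℝ n (fracTime α) (Ioi 0) :=
  fun _ ht => ((Real.contDiffAt_rpow_const_of_ne (ne_of_gt ht)).div_const α).contDiffWithinAt

theorem rpow_one_sub_mul_rpow_sub_one {t : ℝ} (ht : 0 < t) :
    t ^ (1 - α) * t ^ (α - 1) = 1 := by
  rw [← Real.rpow_add ht]
  simp

theorem contDiffOn_of_eqOn_comp_fracTime {n : WithTop ℕ∞} {f F : ℝ → ℝ}
    (hf : ∀ t, 0 < t → f t = F (fracTime α t)) (hF : ContDiff ℝ n F) :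
    ContDiffOn ℝ n f (Ioi 0) :=
  (hF.comp_contDiffOn contDiffOn_fracTime).congr fun t ht => hf t ht

theorem hasDerivAt_of_eqOn_comp_fracTime (hα : α ≠ 0) {f F F' : ℝ → ℝ}
    (hf : ∀ t, 0 < t → f t = F (fracTime α t))
    (hF : ∀ τ, HasDerivAt F (F' τ) τ) {t : ℝ} (ht : 0 < t) :
    HasDerivAt f (F' (fracTime α t) * t ^ (α - 1)) t :=
  ((hF _).comp t (hasDerivAt_fracTime hα ht)).congr_of_eventuallyEq <|
    eventually_of_mem (Ioi_mem_nhds ht) hf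

theorem fracDeriv_twice_of_eqOn_comp_fracTime (hα : α ≠ 0) {f F F' F'' : ℝ → ℝ}
    (hf : ∀ t, 0 < t → f t = F (fracTime α t))
    (hF : ∀ τ, HasDerivAt F (F' τ) τ) (hF' : ∀ τ, HasDerivAt F' (F'' τ) τ) :
    ∃ f' u' : ℝ → ℝ,
      (∀ t, 0 < t → HasDerivAt f (f' t) t) ∧
      (∀ t, 0 < t → HasDerivAt (fun s => s ^ (1 - α) * f' s) (u' t) t) ∧
      (∀ t, 0 < t → t ^ (1 - α) * u' t = F'' (fracTime α t)) := by
  have hcancel : ∀ (c : ℝ → ℝ) t, 0 < t → t ^ (1 - α) * (c t * t ^ (α - 1)) = c t :=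
    fun c t ht => by rw [mul_left_comm, rpow_one_sub_mul_rpow_sub_one ht, mul_one]
  refine ⟨fun t => F' (fracTime α t) * t ^ (α - 1), fun t => F'' (fracTime α t) * t ^ (α - 1),
    fun t ht => hasDerivAt_of_eqOn_comp_fracTime hα hf hF ht,
    fun t ht => hasDerivAt_of_eqOn_comp_fracTime hα (hcancel (F' ∘ fracTime α)) hF' ht,
    hcancel (F'' ∘ fracTime α)⟩

end fracTime

theorem fractional_motion_under_gravity_general
    (α g x₀ u₀ y₀ v₀ : ℝ) (hα0 : 0 < α) (x y : ℝ → ℝ)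
    (hx : ∀ t : ℝ, 0 < t → x t = x₀ + u₀ * t ^ α / α)
    (hy : ∀ t : ℝ, 0 < t → y t = y₀ + v₀ * t ^ α / α - g * t ^ (2 * α) / (2 * α ^ 2)) :
    ContDiffOn ℝ 2 x (Ioi 0) ∧ ContDiffOn ℝ 2 y (Ioi 0) ∧
    ∃ x' y' u' v' : ℝ → ℝ,
      (∀ t : ℝ, 0 < t → HasDerivAt x (x' t) t) ∧
      (∀ t : ℝ, 0 < t → HasDerivAt y (y' t) t) ∧
      (∀ t : ℝ, 0 < t → HasDerivAt (fun s : ℝ => s ^ (1 - α) * x' s) (u' t) t) ∧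
      (∀ t : ℝ, 0 < t → HasDerivAt (fun s : ℝ => s ^ (1 - α) * y' s) (v' t) t) ∧
      (∀ t : ℝ, 0 < t → t ^ (1 - α) * u' t = 0 ∧ t ^ (1 - α) * v' t = -g) := by
  have hxτ : ∀ t, 0 < t → x t = x₀ + u₀ * fracTime α t := fun t ht => by
    rw [hx t ht, fracTime, mul_div_assoc]
  have hyτ : ∀ t, 0 < t → y t = y₀ + v₀ * fracTime α t - g * fracTime α t ^ 2 / 2 :=
    fun t ht => by
      have hsq : t ^ (2 * α) = (t ^ α) ^ 2 := by
        rw [mul_comm, ← Real.rpow_mul_natCast ht.le]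
        norm_num
      rw [hy t ht, fracTime, hsq]
      ring
  obtain ⟨x', u', hx', hu', hxu⟩ := fracDeriv_twice_of_eqOn_comp_fracTime hα0.ne' hxτ
    (fun τ => ((hasDerivAt_id τ).const_mul u₀).const_add x₀ |>.congr_deriv (mul_one u₀))
    (fun τ => hasDerivAt_const τ u₀)
  obtain ⟨y', v', hy', hv', hyv⟩ := fracDeriv_twice_of_eqOn_comp_fracTime hα0.ne' hyτ
    (F' := fun τ => v₀ - g * τ) (F'' := fun _ => -g)
    (fun τ => (((hasDerivAt_id τ).const_mul v₀).const_add y₀).sub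
      (((hasDerivAt_pow 2 τ).const_mul g).div_const 2) |>.congr_deriv (by ring))
    (fun τ => ((hasDerivAt_id τ).const_mul g).const_sub v₀ |>.congr_deriv (by simp))
  exact ⟨contDiffOn_of_eqOn_comp_fracTime (F := fun τ => x₀ + u₀ * τ) hxτ (by fun_prop),
    contDiffOn_of_eqOn_comp_fracTime (F := fun τ => y₀ + v₀ * τ - g * τ ^ 2 / 2) hyτ
      (by fun_prop), x', y', u', v', hx', hy', hu', hv',
    fun t ht => ⟨hxu t ht, hyv t ht⟩⟩

/-- Let `0 < α < 1`, `g > 0`, and `x₀, u₀, y₀, v₀ ∈ ℝ`. The functions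
`x t = x₀ + u₀·t^α/α` and `y t = y₀ + v₀·t^α/α - g·t^{2α}/(2α²)` are twice continuously
differentiable on `t > 0` and satisfy `t^{1-α}·(t^{1-α}·x')' = 0` and
`t^{1-α}·(t^{1-α}·y')' = -g` there; that is, `(x, y)` solves the fractional equations of
motion under gravity `m·D^{2α}x = 0`, `m·D^{2α}y = -m·g` for the fractional derivative
induced by `p(t,h,α) = t + t^{1-α}·h`. -/
theorem fractional_motion_under_gravity
    (α g x₀ u₀ y₀ v₀ : ℝ) (hα0 : 0 < α) (hα1 : α < 1) (hg : 0 < g) (x y : ℝ → ℝ)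
    (hx : ∀ t : ℝ, 0 < t → x t = x₀ + u₀ * t ^ α / α)
    (hy : ∀ t : ℝ, 0 < t → y t = y₀ + v₀ * t ^ α / α - g * t ^ (2 * α) / (2 * α ^ 2)) :
    ContDiffOn ℝ 2 x (Ioi 0) ∧ ContDiffOn ℝ 2 y (Ioi 0) ∧
    ∃ x' y' u' v' : ℝ → ℝ,
      (∀ t : ℝ, 0 < t → HasDerivAt x (x' t) t) ∧
      (∀ t : ℝ, 0 < t → HasDerivAt y (y' t) t) ∧
      (∀ t : ℝ, 0 < t → HasDerivAt (fun s : ℝ => s ^ (1 - α) * x' s) (u' t) t) ∧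
      (∀ t : ℝ, 0 < t → HasDerivAt (fun s : ℝ => s ^ (1 - α) * y' s) (v' t) t) ∧
      (∀ t : ℝ, 0 < t → t ^ (1 - α) * u' t = 0 ∧ t ^ (1 - α) * v' t = -g) :=
  fractional_motion_under_gravity_general α g x₀ u₀ y₀ v₀ hα0 x y hx hy
end
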